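/- Let T1, T2, T3, T4 be the binary trees on Fin 6 with nontrivial split sets Σ(T1) = {{1,2}, {1,2,3}, {1,2,3,4}}, Σ(T2) = {{1,3}, {1,2,3}, {1,2,3,5}}, Σ(T3) = {{1,3}, {1,2,3}, {1,2,3,4}}, Σ(T4) = {{1,2}, {1,2,3}, {1,2,3,5}}, and consider the Kimura 2-parameter Fourier parameterization. Define the linear form f(q) = q_{(G,G,G,G,G,G)} + q_{(G,T,T,T,T,G)} − q_{(G,T,G,G,T,G)} − q_{(G,G,T,T,G,G)} on ℂ^{G^6}, where G=(1,0) and T=(1,1). Then: (i) for all K2P parameters s1 on T1, s2 on T2, and all π ∈ ℂ, f(π·ψ_{T1}(s1) + (1−π)·ψ_{T2}(s2)) = 0; and (ii) for each i ∈ {3, 4} there exist K2P parameters s (which may be taken with c_e = t_e for every split e, i.e. Jukes–Cantor parameters) such that f(ψ_{Ti}(s)) ≠ 0. -/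

import Mathlib

open scoped BigOperators

/-- The group `G = ℤ/2 × ℤ/2` used for 4-state group-based models. -/
abbrev Gp : Type := (ZMod 2) × (ZMod 2)

/-- A split (subset of the taxa `Fin n`) is nontrivial if `2 ≤ |A| ≤ n - 2`. -/
def Split.Nontriv {n : ℕ} (A : Finset (Fin n)) : Prop :=
  2 ≤ A.card ∧ A.card ≤ n - 2

/-- Two splits are compatible if one of the four mutual intersections is empty. -/
def Split.Compat {n : ℕ} (A B : Finset (Fin n)) : Prop :=
  A ∩ B = ∅ ∨ A ∩ Bᶜ = ∅ ∨ Aᶜ ∩ B = ∅ ∨ Aᶜ ∩ Bᶜ = ∅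

instance {n : ℕ} (A : Finset (Fin n)) : Decidable (Split.Nontriv A) := by
  unfold Split.Nontriv; infer_instance

instance {n : ℕ} (A B : Finset (Fin n)) : Decidable (Split.Compat A B) := by
  unfold Split.Compat; infer_instance

/-- A binary tree on the taxa `Fin n`, encoded by its set `Σ(T)` of `n - 3` pairwise
compatible nontrivial splits, no two of which are equal or complementary. -/
structure SplitBinaryTree (n : ℕ) where
  splits : Finset (Finset (Fin n))
  card_splits : splits.card = n - 3
  nontriv : ∀ A ∈ splits, Split.Nontriv A
  compat : ∀ A ∈ splits, ∀ B ∈ splits, Split.Compat A B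
  not_compl : ∀ A ∈ splits, ∀ B ∈ splits, A ≠ B → A ≠ Bᶜ

/-- The full split set `Σ*(T)`: the nontrivial splits together with the `n` trivial splits. -/
def fullSplits {n : ℕ} (T : SplitBinaryTree n) : Finset (Finset (Fin n)) :=
  T.splits ∪ Finset.univ.image (fun i : Fin n => ({i} : Finset (Fin n)))

/-- Two split systems agree up to complementation of individual splits. -/
def sameSplits {n : ℕ} (s t : Finset (Finset (Fin n))) : Prop :=
  ∀ A : Finset (Fin n), (A ∈ s ∨ Aᶜ ∈ s) ↔ (A ∈ t ∨ Aᶜ ∈ t)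

/-- Equality of binary trees: split sets agree up to complementation of individual splits. -/
def sameTree {n : ℕ} (T1 T2 : SplitBinaryTree n) : Prop :=
  sameSplits T1.splits T2.splits

/-- The Jukes–Cantor Fourier parameterization of the tree `T`. -/
noncomputable def psiJC {n : ℕ} (T : SplitBinaryTree n) (a : ↥(fullSplits T) → ℂ) :
    (Fin n → Gp) → ℂ := fun g =>
  if (∑ i, g i) = 0 then
    ∏ e : ↥(fullSplits T), (if (∑ i ∈ (e : Finset (Fin n)), g i) = 0 then 1 else a e)
  else 0

/-- The 2-tree mixture parameterization for the Jukes–Cantor model. -/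
noncomputable def psiMixJC {n : ℕ} (T1 T2 : SplitBinaryTree n)
    (a : ↥(fullSplits T1) → ℂ) (b : ↥(fullSplits T2) → ℂ) (pi : ℂ) :
    (Fin n → Gp) → ℂ := fun g =>
  pi * psiJC T1 a g + (1 - pi) * psiJC T2 b g

/-- The factor contributed by a single split in the K2P Fourier parameterization:
`1` for group element `A = (0,0)`, `c_e` for `C = (0,1)`, `t_e` for `G = (1,0)` or `T = (1,1)`. -/
def k2pFactor (p : ℂ × ℂ) (h : Gp) : ℂ :=
  if h = ((0 : ZMod 2), (0 : ZMod 2)) then 1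
  else if h = ((0 : ZMod 2), (1 : ZMod 2)) then p.1
  else p.2

/-- The Kimura 2-parameter Fourier parameterization of the tree `T`; the parameter of
split `e` is a pair `(c_e, t_e)`. -/
noncomputable def psiK2P {n : ℕ} (T : SplitBinaryTree n) (s : ↥(fullSplits T) → ℂ × ℂ) :
    (Fin n → Gp) → ℂ := fun g =>
  if (∑ i, g i) = 0 then
    ∏ e : ↥(fullSplits T), k2pFactor (s e) (∑ i ∈ (e : Finset (Fin n)), g i)
  else 0

/-- The 2-tree mixture parameterization for the K2P model. -/
noncomputable def psiMixK2P {n : ℕ} (T1 T2 : SplitBinaryTree n)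
    (s1 : ↥(fullSplits T1) → ℂ × ℂ) (s2 : ↥(fullSplits T2) → ℂ × ℂ) (pi : ℂ) :
    (Fin n → Gp) → ℂ := fun g =>
  pi * psiK2P T1 s1 g + (1 - pi) * psiK2P T2 s2 g

/-- The group elements `G = (1,0)` and `T = (1,1)` of `ℤ/2 × ℤ/2`. -/
def gG : Gp := ((1 : ZMod 2), (0 : ZMod 2))
def gT : Gp := ((1 : ZMod 2), (1 : ZMod 2))

/-- `Σ(T1) = {12|3456, 123|456, 1234|56}` (taxa `1,…,6` identified with `0,…,5 : Fin 6`). -/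
def sexT1 : SplitBinaryTree 6 :=
  ⟨{({0,1} : Finset (Fin 6)), {0,1,2}, {0,1,2,3}}, by decide, by decide, by decide, by decide⟩
/-- `Σ(T2) = {13|2456, 123|456, 1235|46}`. -/
def sexT2 : SplitBinaryTree 6 :=
  ⟨{({0,2} : Finset (Fin 6)), {0,1,2}, {0,1,2,4}}, by decide, by decide, by decide, by decide⟩
/-- `Σ(T3) = {13|2456, 123|456, 1234|56}`. -/
def sexT3 : SplitBinaryTree 6 :=
  ⟨{({0,2} : Finset (Fin 6)), {0,1,2}, {0,1,2,3}}, by decide, by decide, by decide, by decide⟩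
/-- `Σ(T4) = {12|3456, 123|456, 1235|46}`. -/
def sexT4 : SplitBinaryTree 6 :=
  ⟨{({0,1} : Finset (Fin 6)), {0,1,2}, {0,1,2,4}}, by decide, by decide, by decide, by decide⟩

/-- The linear form `f(q) = q_{GGGGGG} + q_{GTTTTG} − q_{GTGGTG} − q_{GGTTGG}`. -/
noncomputable def linformSextet (q : (Fin 6 → Gp) → ℂ) : ℂ :=
  q ![gG, gG, gG, gG, gG, gG] + q ![gG, gT, gT, gT, gT, gG]
    - q ![gG, gT, gG, gG, gT, gG] - q ![gG, gG, gT, gT, gG, gG]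

/-!
The K2P parameterization cannot tell the group elements `G` and `T` apart: a split whose sum has
first coordinate `1` always contributes `t_e`. On `T1` the patterns `GGGGGG, GGTTGG` have, split by
split, the same sums up to this identification, and so do `GTTTTG, GTGGTG`; on `T2` the pairing is
`GGGGGG, GTGGTG` and `GTTTTG, GGTTGG`. Either way the four terms of `f` cancel in pairs, and `f` is
linear, so it vanishes on the mixture. On `T3` and `T4` the Jukes–Cantor point with every parameter
equal to `2` gives the coordinates `2^7, 2^9, 2^8, 2^8`, so `f = 2^7`.
-/

open Finset

lemma k2pFactor_of_fst_eq_one (p : ℂ × ℂ) {h : Gp} (h1 : h.1 = 1) : k2pFactor p h = p.2 := by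
  obtain ⟨a, b⟩ := h
  simp only at h1
  subst h1
  simp [k2pFactor, Prod.ext_iff]

lemma k2pFactor_diag (a : ℂ) (h : Gp) : k2pFactor (a, a) h = if h = 0 then 1 else a := by
  unfold k2pFactor
  split_ifs <;> simp_all [Prod.ext_iff]

lemma psiK2P_eq_of_splitSums {n : ℕ} (T : SplitBinaryTree n) (s : ↥(fullSplits T) → ℂ × ℂ)
    {g g' : Fin n → Gp} (h0 : ∑ i, g i = 0) (h0' : ∑ i, g' i = 0)
    (he : ∀ e ∈ fullSplits T, ∑ i ∈ e, g i = ∑ i ∈ e, g' i ∨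
      ((∑ i ∈ e, g i).1 = 1 ∧ (∑ i ∈ e, g' i).1 = 1)) :
    psiK2P T s g = psiK2P T s g' := by
  rw [psiK2P, psiK2P, if_pos h0, if_pos h0']
  refine prod_congr rfl fun e _ => ?_
  rcases he e e.2 with heq | ⟨h1, h1'⟩
  · rw [heq]
  · rw [k2pFactor_of_fst_eq_one _ h1, k2pFactor_of_fst_eq_one _ h1']

def changedSplits {n : ℕ} (T : SplitBinaryTree n) (g : Fin n → Gp) : Finset (Finset (Fin n)) :=
  (fullSplits T).filter fun e => ∑ i ∈ e, g i ≠ 0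

lemma psiK2P_const_diag {n : ℕ} (T : SplitBinaryTree n) (a : ℂ) {g : Fin n → Gp}
    (h0 : ∑ i, g i = 0) :
    psiK2P T (fun _ => (a, a)) g = a ^ (changedSplits T g).card := by
  rw [psiK2P, if_pos h0]
  simp only [k2pFactor_diag]
  rw [prod_coe_sort (fullSplits T) fun e => if ∑ i ∈ e, g i = 0 then (1 : ℂ) else a,
    prod_ite, prod_const_one, one_mul, prod_const, changedSplits]

lemma linformSextet_psiMixK2P (T1 T2 : SplitBinaryTree 6) (s1 : ↥(fullSplits T1) → ℂ × ℂ)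
    (s2 : ↥(fullSplits T2) → ℂ × ℂ) (pi : ℂ) :
    linformSextet (psiMixK2P T1 T2 s1 s2 pi) =
      pi * linformSextet (psiK2P T1 s1) + (1 - pi) * linformSextet (psiK2P T2 s2) := by
  simp only [linformSextet, psiMixK2P]
  ring

lemma linformSextet_psiK2P_sexT1 (s : ↥(fullSplits sexT1) → ℂ × ℂ) :
    linformSextet (psiK2P sexT1 s) = 0 := by
  have h14 : psiK2P sexT1 s ![gG, gG, gG, gG, gG, gG] = psiK2P sexT1 s ![gG, gG, gT, gT, gG, gG] :=
    psiK2P_eq_of_splitSums _ _ (by decide) (by decide) (by decide)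
  have h23 : psiK2P sexT1 s ![gG, gT, gT, gT, gT, gG] = psiK2P sexT1 s ![gG, gT, gG, gG, gT, gG] :=
    psiK2P_eq_of_splitSums _ _ (by decide) (by decide) (by decide)
  rw [linformSextet, h14, h23]
  ring

lemma linformSextet_psiK2P_sexT2 (s : ↥(fullSplits sexT2) → ℂ × ℂ) :
    linformSextet (psiK2P sexT2 s) = 0 := by
  have h13 : psiK2P sexT2 s ![gG, gG, gG, gG, gG, gG] = psiK2P sexT2 s ![gG, gT, gG, gG, gT, gG] :=
    psiK2P_eq_of_splitSums _ _ (by decide) (by decide) (by decide)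
  have h24 : psiK2P sexT2 s ![gG, gT, gT, gT, gT, gG] = psiK2P sexT2 s ![gG, gG, gT, gT, gG, gG] :=
    psiK2P_eq_of_splitSums _ _ (by decide) (by decide) (by decide)
  rw [linformSextet, h13, h24]
  ring

lemma linformSextet_psiK2P_two_ne_zero (T : SplitBinaryTree 6)
    (h1 : (changedSplits T ![gG, gG, gG, gG, gG, gG]).card = 7)
    (h2 : (changedSplits T ![gG, gT, gT, gT, gT, gG]).card = 9)
    (h3 : (changedSplits T ![gG, gT, gG, gG, gT, gG]).card = 8)
    (h4 : (changedSplits T ![gG, gG, gT, gT, gG, gG]).card = 8) :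
    linformSextet (psiK2P T fun _ => (2, 2)) ≠ 0 := by
  rw [linformSextet, psiK2P_const_diag _ _ (by decide), psiK2P_const_diag _ _ (by decide),
    psiK2P_const_diag _ _ (by decide), psiK2P_const_diag _ _ (by decide), h1, h2, h3, h4]
  norm_num

/-- the linear form `f` vanishes on the whole image of the K2P mixture
parameterization on `(T1, T2)`, but vanishes identically on neither the K2P (indeed
Jukes–Cantor) model on `T3` nor on `T4`. -/
theorem sextet_linear_invariant :
    (∀ (s1 : ↥(fullSplits sexT1) → ℂ × ℂ) (s2 : ↥(fullSplits sexT2) → ℂ × ℂ) (pi : ℂ),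
      linformSextet (psiMixK2P sexT1 sexT2 s1 s2 pi) = 0) ∧
    (∃ s : ↥(fullSplits sexT3) → ℂ × ℂ,
      (∀ e, (s e).1 = (s e).2) ∧ linformSextet (psiK2P sexT3 s) ≠ 0) ∧
    (∃ s : ↥(fullSplits sexT4) → ℂ × ℂ,
      (∀ e, (s e).1 = (s e).2) ∧ linformSextet (psiK2P sexT4 s) ≠ 0) := by
  refine ⟨fun s1 s2 pi => ?_, ⟨fun _ => (2, 2), fun _ => rfl, ?_⟩,
    ⟨fun _ => (2, 2), fun _ => rfl, ?_⟩⟩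
  · rw [linformSextet_psiMixK2P, linformSextet_psiK2P_sexT1, linformSextet_psiK2P_sexT2]
    ring
  · exact linformSextet_psiK2P_two_ne_zero sexT3 (by decide) (by decide) (by decide) (by decide)
  · exact linformSextet_psiK2P_two_ne_zero sexT4 (by decide) (by decide) (by decide) (by decide)
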